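/- Let A be a ternary Jordan algebra over a field F with char F ≠ 2, 3 that decomposes as A = B ⊕ C, where B and C are ideals of A with B ∩ C = {0} and B + C = A, and suppose Z(A) = {0}. Then every derivation D of A satisfies D(B) ⊆ B and D(C) ⊆ C, and Der(A) = Der(B) ⊕ Der(C): identifying a derivation of B (resp. of C) with its extension to A by zero on C (resp. on B), every derivation of A is uniquely the sum of a derivation of B and a derivation of C, and both summands are ideals of the Lie algebra Der(A). -/

import Mathlib

/-- A ternary Jordan algebra structure: a totally symmetric trilinear multiplication
`t` on a vector space such that every commutator of right multiplication operators
is a derivation. -/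
structure IsTernaryJordan (F : Type*) [Field F] {A : Type*} [AddCommGroup A]
    [Module F A] (t : A → A → A → A) : Prop where
  add_left : ∀ x y z w : A, t (x + y) z w = t x z w + t y z w
  smul_left : ∀ (c : F) (x y z : A), t (c • x) y z = c • t x y z
  symm12 : ∀ x y z : A, t x y z = t y x z
  symm23 : ∀ x y z : A, t x y z = t x z y
  comm_der : ∀ x₂ x₃ y₂ y₃ a b c : A,
    t (t (t a b c) x₂ x₃) y₂ y₃ - t (t (t a b c) y₂ y₃) x₂ x₃ =
      t (t (t a x₂ x₃) y₂ y₃ - t (t a y₂ y₃) x₂ x₃) b c +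
        t a (t (t b x₂ x₃) y₂ y₃ - t (t b y₂ y₃) x₂ x₃) c +
          t a b (t (t c x₂ x₃) y₂ y₃ - t (t c y₂ y₃) x₂ x₃)
/-- A derivation of the ternary algebra `(A, t)`. -/
def IsTDer (F : Type*) [Field F] {A : Type*} [AddCommGroup A] [Module F A]
    (t : A → A → A → A) (D : A →ₗ[F] A) : Prop :=
  ∀ x y z : A, D (t x y z) = t (D x) y z + t x (D y) z + t x y (D z)

/-- The extension-by-zero picture: `D` is (the extension to `A` of) a derivation of
the ideal `B`, vanishing on the complementary ideal `C`. -/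
def DerOn (F : Type*) [Field F] {A : Type*} [AddCommGroup A] [Module F A]
    (t : A → A → A → A) (B C : Submodule F A) (D : A →ₗ[F] A) : Prop :=
  (∀ x ∈ B, D x ∈ B) ∧ (∀ x ∈ C, D x = 0) ∧
    ∀ x ∈ B, ∀ y ∈ B, ∀ z ∈ B,
      D (t x y z) = t (D x) y z + t x (D y) z + t x y (D z)

/-!
Since `B` and `C` are ideals with `B ∩ C = 0`, every product with one factor in `B` and another
in `C` lies in `B ∩ C`, so `[[b₁ + c₁, b₂ + c₂, b₃ + c₃]] = [[b₁, b₂, b₃]] + [[c₁, c₂, c₃]]`.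
In particular an element of `C` annihilated by `C × C` lies in `Z(A) = 0`. For a derivation `D`
and `b ∈ B`, `c₁, c₂ ∈ C`, applying `D` to `[[c₁, c₂, b]] = 0` leaves `[[c₁, c₂, D b]] = 0`, so
the `C`-component of `D b` vanishes and `D(B) ⊆ B`. The decomposition `D = D π_B + D π_C` along
the projections then splits `Der(A)`, and the same invariance makes both parts Lie ideals.
-/

section

variable {F : Type*} [Field F] {A : Type*} [AddCommGroup A] [Module F A] {t : A → A → A → A}

namespace IsTernaryJordan

theorem add_mid (ht : IsTernaryJordan F t) (x a b z : A) :
    t x (a + b) z = t x a z + t x b z := by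
  rw [ht.symm12, ht.add_left, ht.symm12 a, ht.symm12 b]

theorem add_right (ht : IsTernaryJordan F t) (x y a b : A) :
    t x y (a + b) = t x y a + t x y b := by
  rw [ht.symm23, ht.add_mid, ht.symm23 x a, ht.symm23 x b]

theorem sub_left (ht : IsTernaryJordan F t) (a b y z : A) :
    t (a - b) y z = t a y z - t b y z :=
  map_sub (AddMonoidHom.mk' (t · y z) (ht.add_left · · y z)) a b

theorem sub_mid (ht : IsTernaryJordan F t) (x a b z : A) :
    t x (a - b) z = t x a z - t x b z := by
  rw [ht.symm12, ht.sub_left, ht.symm12 a, ht.symm12 b]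

theorem sub_right (ht : IsTernaryJordan F t) (x y a b : A) :
    t x y (a - b) = t x y a - t x y b := by
  rw [ht.symm23, ht.sub_mid, ht.symm23 x a, ht.symm23 x b]

theorem zero_left (ht : IsTernaryJordan F t) (y z : A) : t 0 y z = 0 := by
  simpa using ht.sub_left 0 0 y z

theorem zero_mid (ht : IsTernaryJordan F t) (x z : A) : t x 0 z = 0 := by
  rw [ht.symm12, ht.zero_left]

theorem zero_right (ht : IsTernaryJordan F t) (x y : A) : t x y 0 = 0 := by
  rw [ht.symm23, ht.zero_mid]

end IsTernaryJordan

theorem IsTDer.comp_sub_comp (ht : IsTernaryJordan F t) {D₁ D₂ : A →ₗ[F] A}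
    (h₁ : IsTDer F t D₁) (h₂ : IsTDer F t D₂) : IsTDer F t (D₁ ∘ₗ D₂ - D₂ ∘ₗ D₁) := by
  intro x y z
  simp only [LinearMap.sub_apply, LinearMap.comp_apply, h₁ _ _ _, h₂ _ _ _, map_add,
    ht.sub_left, ht.sub_mid, ht.sub_right]
  abel

structure IsIdealCompl (t : A → A → A → A) (B C : Submodule F A) : Prop where
  mul_mem_of_mem_left : ∀ b ∈ B, ∀ x y : A, t b x y ∈ B
  mul_mem_of_mem_right : ∀ c ∈ C, ∀ x y : A, t c x y ∈ C
  isCompl : IsCompl B C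

namespace IsIdealCompl

variable {B C : Submodule F A}

theorem symm (hd : IsIdealCompl t B C) : IsIdealCompl t C B :=
  ⟨hd.mul_mem_of_mem_right, hd.mul_mem_of_mem_left, hd.isCompl.symm⟩

theorem exists_add (hd : IsIdealCompl t B C) (x : A) : ∃ b ∈ B, ∃ c ∈ C, b + c = x :=
  Submodule.mem_sup.mp (hd.isCompl.sup_eq_top ▸ Submodule.mem_top)

theorem mul_eq_zero₁₂ (hd : IsIdealCompl t B C) (ht : IsTernaryJordan F t) {b c : A}
    (hb : b ∈ B) (hc : c ∈ C) (x : A) : t b c x = 0 :=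
  Submodule.disjoint_def.mp hd.isCompl.disjoint _ (hd.mul_mem_of_mem_left b hb c x)
    (ht.symm12 b c x ▸ hd.mul_mem_of_mem_right c hc b x)

theorem mul_eq_zero₁₃ (hd : IsIdealCompl t B C) (ht : IsTernaryJordan F t) {b c : A}
    (hb : b ∈ B) (hc : c ∈ C) (x : A) : t b x c = 0 := by
  rw [ht.symm23]
  exact hd.mul_eq_zero₁₂ ht hb hc x

theorem mul_eq_zero₂₃ (hd : IsIdealCompl t B C) (ht : IsTernaryJordan F t) {b c : A}
    (hb : b ∈ B) (hc : c ∈ C) (x : A) : t x b c = 0 := by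
  rw [ht.symm12]
  exact hd.mul_eq_zero₁₃ ht hb hc x

theorem mul_add_add_add (hd : IsIdealCompl t B C) (ht : IsTernaryJordan F t)
    {b₁ b₂ b₃ c₁ c₂ c₃ : A} (hb₁ : b₁ ∈ B) (hc₁ : c₁ ∈ C) (hb₂ : b₂ ∈ B) (hc₂ : c₂ ∈ C)
    (hb₃ : b₃ ∈ B) (hc₃ : c₃ ∈ C) :
    t (b₁ + c₁) (b₂ + c₂) (b₃ + c₃) = t b₁ b₂ b₃ + t c₁ c₂ c₃ := by
  simp only [ht.add_left, ht.add_mid, ht.add_right, hd.mul_eq_zero₁₂ ht hb₁ hc₂,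
    hd.mul_eq_zero₁₃ ht hb₁ hc₃, hd.symm.mul_eq_zero₁₂ ht hc₁ hb₂,
    hd.symm.mul_eq_zero₁₃ ht hc₁ hb₃, add_zero, zero_add]

theorem eq_zero_of_forall_mul_eq_zero (hd : IsIdealCompl t B C) (ht : IsTernaryJordan F t)
    (hZ : ∀ z : A, (∀ x y : A, t x y z = 0) → z = 0) {b : A} (hb : b ∈ B)
    (h : ∀ b₁ ∈ B, ∀ b₂ ∈ B, t b₁ b₂ b = 0) : b = 0 := by
  refine hZ b fun x y => ?_
  obtain ⟨b₁, hb₁, c₁, hc₁, rfl⟩ := hd.exists_add x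
  obtain ⟨b₂, hb₂, c₂, hc₂, rfl⟩ := hd.exists_add y
  simpa [h b₁ hb₁ b₂ hb₂, ht.zero_right] using
    hd.mul_add_add_add ht hb₁ hc₁ hb₂ hc₂ hb C.zero_mem

theorem map_mem_of_isTDer (hd : IsIdealCompl t B C) (ht : IsTernaryJordan F t)
    (hZ : ∀ z : A, (∀ x y : A, t x y z = 0) → z = 0) {D : A →ₗ[F] A} (hD : IsTDer F t D)
    {b : A} (hb : b ∈ B) : D b ∈ B := by
  obtain ⟨b', hb', c', hc', hDb⟩ := hd.exists_add (D b)
  suffices c' = 0 by rw [← hDb, this, add_zero]; exact hb'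
  refine hd.symm.eq_zero_of_forall_mul_eq_zero ht hZ hc' fun c₁ hc₁ c₂ hc₂ => ?_
  have hder := hD c₁ c₂ b
  rw [hd.symm.mul_eq_zero₁₃ ht hc₁ hb, map_zero, hd.symm.mul_eq_zero₂₃ ht hc₂ hb,
    hd.symm.mul_eq_zero₁₃ ht hc₁ hb, ← hDb, ht.add_right, hd.symm.mul_eq_zero₁₃ ht hc₁ hb'] at hder
  simpa using hder.symm

theorem isTDer_of_derOn (hd : IsIdealCompl t B C) (ht : IsTernaryJordan F t) {D : A →ₗ[F] A}
    (hD : DerOn F t B C D) : IsTDer F t D := by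
  obtain ⟨hDB, hDC, hder⟩ := hD
  intro x y z
  obtain ⟨b₁, hb₁, c₁, hc₁, rfl⟩ := hd.exists_add x
  obtain ⟨b₂, hb₂, c₂, hc₂, rfl⟩ := hd.exists_add y
  obtain ⟨b₃, hb₃, c₃, hc₃, rfl⟩ := hd.exists_add z
  -- `D b + 0` is the decomposition of `D (b + c)`, so `mul_add_add_add` applies to each term.
  have hD_add : ∀ {b c : A}, c ∈ C → D (b + c) = D b + 0 := fun hc => by
    rw [map_add, hDC _ hc]
  rw [hd.mul_add_add_add ht hb₁ hc₁ hb₂ hc₂ hb₃ hc₃, map_add,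
    hDC _ (hd.mul_mem_of_mem_right c₁ hc₁ c₂ c₃), add_zero, hder b₁ hb₁ b₂ hb₂ b₃ hb₃,
    hD_add hc₁, hD_add hc₂, hD_add hc₃,
    hd.mul_add_add_add ht (hDB b₁ hb₁) C.zero_mem hb₂ hc₂ hb₃ hc₃,
    hd.mul_add_add_add ht hb₁ hc₁ (hDB b₂ hb₂) C.zero_mem hb₃ hc₃,
    hd.mul_add_add_add ht hb₁ hc₁ hb₂ hc₂ (hDB b₃ hb₃) C.zero_mem,
    ht.zero_left, ht.zero_mid, ht.zero_right]
  simp only [add_zero]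

theorem derOn_comp_sub_comp (hd : IsIdealCompl t B C) (ht : IsTernaryJordan F t)
    (hZ : ∀ z : A, (∀ x y : A, t x y z = 0) → z = 0) {D₁ D : A →ₗ[F] A}
    (hD₁ : DerOn F t B C D₁) (hD : IsTDer F t D) : DerOn F t B C (D₁ ∘ₗ D - D ∘ₗ D₁) := by
  have hbr := (hd.isTDer_of_derOn ht hD₁).comp_sub_comp ht hD
  obtain ⟨hD₁B, hD₁C, -⟩ := hD₁
  refine ⟨fun b hb => ?_, fun c hc => ?_, fun x _ y _ z _ => hbr x y z⟩
  · exact B.sub_mem (hD₁B _ (hd.map_mem_of_isTDer ht hZ hD hb))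
      (hd.map_mem_of_isTDer ht hZ hD (hD₁B b hb))
  · simp [hD₁C _ (hd.symm.map_mem_of_isTDer ht hZ hD hc), hD₁C c hc]

theorem derOn_comp_projection (hd : IsIdealCompl t B C) (ht : IsTernaryJordan F t)
    (hZ : ∀ z : A, (∀ x y : A, t x y z = 0) → z = 0) {D : A →ₗ[F] A} (hD : IsTDer F t D) :
    DerOn F t B C (D ∘ₗ B.projection C hd.isCompl) := by
  have hπ {b : A} (hb : b ∈ B) : B.projection C hd.isCompl b = b :=
    Submodule.projection_apply_of_mem_left _ hb
  refine ⟨fun b hb => ?_, fun c hc => ?_, fun x hx y hy z hz => ?_⟩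
  · simpa [hπ hb] using hd.map_mem_of_isTDer ht hZ hD hb
  · simp [Submodule.projection_apply_of_mem_right _ hc]
  · simpa [hπ hx, hπ hy, hπ hz, hπ (hd.mul_mem_of_mem_left x hx y z)] using hD x y z

theorem eq_comp_projection_of_derOn (hd : IsIdealCompl t B C) {D D₁ D₂ : A →ₗ[F] A}
    (hD₁ : DerOn F t B C D₁) (hD₂ : DerOn F t C B D₂) (hD : D = D₁ + D₂) :
    D₁ = D ∘ₗ B.projection C hd.isCompl := by
  subst hD
  refine LinearMap.ext_on_codisjoint hd.isCompl.codisjoint (fun b hb => ?_) (fun c hc => ?_)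
  · simp [Submodule.projection_apply_of_mem_left _ hb, hD₂.2.1 b hb]
  · simp [Submodule.projection_apply_of_mem_right _ hc, hD₁.2.1 c hc]

theorem existsUnique_derOn_add (hd : IsIdealCompl t B C) (ht : IsTernaryJordan F t)
    (hZ : ∀ z : A, (∀ x y : A, t x y z = 0) → z = 0) {D : A →ₗ[F] A} (hD : IsTDer F t D) :
    ∃! p : (A →ₗ[F] A) × (A →ₗ[F] A), DerOn F t B C p.1 ∧ DerOn F t C B p.2 ∧ D = p.1 + p.2 := by
  refine ⟨(D ∘ₗ B.projection C hd.isCompl, D ∘ₗ C.projection B hd.isCompl.symm),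
    ⟨hd.derOn_comp_projection ht hZ hD, hd.symm.derOn_comp_projection ht hZ hD, ?_⟩, ?_⟩
  · rw [← LinearMap.comp_add, Submodule.projection_add_projection_eq_id, LinearMap.comp_id]
  · rintro ⟨D₁, D₂⟩ ⟨hD₁, hD₂, rfl⟩
    exact Prod.ext (hd.eq_comp_projection_of_derOn hD₁ hD₂ rfl)
      (hd.symm.eq_comp_projection_of_derOn hD₂ hD₁ (add_comm _ _))

end IsIdealCompl

end

theorem stmt11_general {F : Type*} [Field F] {A : Type*} [AddCommGroup A] [Module F A]
    (t : A → A → A → A) (ht : IsTernaryJordan F t)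
    (B C : Submodule F A)
    (hB : ∀ b ∈ B, ∀ x y : A, t b x y ∈ B)
    (hC : ∀ c ∈ C, ∀ x y : A, t c x y ∈ C)
    (hdisj : B ⊓ C = ⊥) (hsum : B ⊔ C = ⊤)
    (hZ : ∀ z : A, (∀ x y : A, t x y z = 0) → z = 0) :
    (∀ D : A →ₗ[F] A, IsTDer F t D → (∀ b ∈ B, D b ∈ B) ∧ ∀ c ∈ C, D c ∈ C) ∧
    (∀ D : A →ₗ[F] A, DerOn F t B C D → IsTDer F t D) ∧
    (∀ D : A →ₗ[F] A, DerOn F t C B D → IsTDer F t D) ∧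
    (∀ D : A →ₗ[F] A, IsTDer F t D →
      ∃! p : (A →ₗ[F] A) × (A →ₗ[F] A),
        DerOn F t B C p.1 ∧ DerOn F t C B p.2 ∧ D = p.1 + p.2) ∧
    (∀ D₁ D : A →ₗ[F] A, DerOn F t B C D₁ → IsTDer F t D →
      DerOn F t B C (D₁ ∘ₗ D - D ∘ₗ D₁)) ∧
    (∀ D₂ D : A →ₗ[F] A, DerOn F t C B D₂ → IsTDer F t D →
      DerOn F t C B (D₂ ∘ₗ D - D ∘ₗ D₂)) := by
  have hd : IsIdealCompl t B C :=
    ⟨hB, hC, ⟨disjoint_iff.mpr hdisj, codisjoint_iff.mpr hsum⟩⟩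
  exact ⟨fun _ hD => ⟨fun _ => hd.map_mem_of_isTDer ht hZ hD,
      fun _ => hd.symm.map_mem_of_isTDer ht hZ hD⟩,
    fun _ => hd.isTDer_of_derOn ht, fun _ => hd.symm.isTDer_of_derOn ht,
    fun _ => hd.existsUnique_derOn_add ht hZ, fun _ _ => hd.derOn_comp_sub_comp ht hZ,
    fun _ _ => hd.symm.derOn_comp_sub_comp ht hZ⟩

/-- if `A = B ⊕ C` with `B, C` ideals and `Z(A) = 0`, then every
derivation preserves `B` and `C`, extensions by zero of derivations of `B` (resp.
`C`) are derivations of `A`, `Der(A) = Der(B) ⊕ Der(C)` (unique decomposition), and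
both summands are Lie ideals of `Der(A)`. -/
theorem stmt11 {F : Type*} [Field F] {A : Type*} [AddCommGroup A] [Module F A]
    (h2 : (2 : F) ≠ 0) (h3 : (3 : F) ≠ 0)
    (t : A → A → A → A) (ht : IsTernaryJordan F t)
    (B C : Submodule F A)
    (hB : ∀ b ∈ B, ∀ x y : A, t b x y ∈ B)
    (hC : ∀ c ∈ C, ∀ x y : A, t c x y ∈ C)
    (hdisj : B ⊓ C = ⊥) (hsum : B ⊔ C = ⊤)
    (hZ : ∀ z : A, (∀ x y : A, t x y z = 0) → z = 0) :
    (∀ D : A →ₗ[F] A, IsTDer F t D → (∀ b ∈ B, D b ∈ B) ∧ ∀ c ∈ C, D c ∈ C) ∧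
    (∀ D : A →ₗ[F] A, DerOn F t B C D → IsTDer F t D) ∧
    (∀ D : A →ₗ[F] A, DerOn F t C B D → IsTDer F t D) ∧
    (∀ D : A →ₗ[F] A, IsTDer F t D →
      ∃! p : (A →ₗ[F] A) × (A →ₗ[F] A),
        DerOn F t B C p.1 ∧ DerOn F t C B p.2 ∧ D = p.1 + p.2) ∧
    (∀ D₁ D : A →ₗ[F] A, DerOn F t B C D₁ → IsTDer F t D →
      DerOn F t B C (D₁ ∘ₗ D - D ∘ₗ D₁)) ∧
    (∀ D₂ D : A →ₗ[F] A, DerOn F t C B D₂ → IsTDer F t D →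
      DerOn F t C B (D₂ ∘ₗ D - D ∘ₗ D₂)) :=
  stmt11_general t ht B C hB hC hdisj hsum hZ
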